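/- For every positive integer $k$, $\sum_{n=1}^{\infty} \frac{H_n^2 - \zeta_n(2)}{n(n+k)} = \frac{1}{k}\left\{ 2\zeta(3) + \frac{H_k^3 + 3 H_k \zeta_k(2) + 2\zeta_k(3)}{3} - \frac{H_k^2 + \zeta_k(2)}{k} \right\}$. -/

import Mathlib

noncomputable def H (n : ℕ) : ℝ := ∑ j ∈ Finset.Icc 1 n, (1 : ℝ) / j

noncomputable def zh (m n : ℕ) : ℝ := ∑ j ∈ Finset.Icc 1 n, (1 : ℝ) / (j : ℝ) ^ m

noncomputable def Z (s : ℕ) : ℝ := ∑' n : ℕ, 1 / ((n : ℝ) + 1) ^ s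

open Filter Finset Topology

/-!
Write `a n = H n ^ 2 - zh 2 n` and `D n = (H (n + k) - H n) / k`. Then
`D n - D (n + 1) = 1 / ((n + 1) (n + 1 + k))` and `a (n + 1) - a n = 2 H n / (n + 1)`, so summation
by parts turns the series into `(2 / k) ∑_{i < k} ∑_n H n / ((n + 1) (n + 1 + i))`. For `i ≥ 1` the
inner series equals `(H i ^ 2 + zh 2 i) / (2 i)`, by a second summation by parts; for `i = 0` it is
Euler's `∑ H (n - 1) / n ^ 2 = ζ(3)`. The finite sum over `i` is then a telescoping identity between
power sums. All boundary terms vanish because `H n = O(n ^ (1 / 4))`.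
-/

lemma H_zero : H 0 = 0 := by simp [H]

lemma zh_zero (m : ℕ) : zh m 0 = 0 := by simp [zh]

lemma H_succ (n : ℕ) : H (n + 1) = H n + 1 / ((n : ℝ) + 1) := by
  rw [H, sum_Icc_succ_top (by omega)]
  push_cast [H]
  rfl

lemma zh_succ (m n : ℕ) : zh m (n + 1) = zh m n + 1 / ((n : ℝ) + 1) ^ m := by
  rw [zh, sum_Icc_succ_top (by omega)]
  push_cast [zh]
  rfl

lemma H_nonneg (n : ℕ) : 0 ≤ H n := sum_nonneg fun _ _ => by positivity

lemma zh_nonneg (m n : ℕ) : 0 ≤ zh m n := sum_nonneg fun _ _ => by positivity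

lemma H_eq_sum_range (n : ℕ) : H n = ∑ i ∈ range n, 1 / ((i : ℝ) + 1) := by
  induction n with
  | zero => simp [H_zero]
  | succ n ih => rw [H_succ, ih, sum_range_succ]

lemma H_add_sub_H (n k : ℕ) : H (n + k) - H n = ∑ i ∈ range k, 1 / ((n : ℝ) + i + 1) := by
  induction k with
  | zero => simp
  | succ k ih =>
    rw [sum_range_succ, ← ih, ← add_assoc, H_succ]
    push_cast
    ring_nf

lemma H_le_rpow (n : ℕ) : H n ≤ 5 * ((n : ℝ) + 1) ^ (1 / 4 : ℝ) := by
  have hH : H n ≤ 1 + Real.log n := by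
    simpa [H_eq_sum_range, harmonic] using harmonic_le_one_add_log n
  have hlog : Real.log n ≤ 4 * ((n : ℝ) + 1) ^ (1 / 4 : ℝ) := by
    have hmono : (n : ℝ) ^ (1 / 4 : ℝ) ≤ ((n : ℝ) + 1) ^ (1 / 4 : ℝ) :=
      Real.rpow_le_rpow n.cast_nonneg (by linarith) (by norm_num)
    linarith [Real.log_le_rpow_div n.cast_nonneg (ε := 1 / 4) (by norm_num)]
  have hone : 1 ≤ ((n : ℝ) + 1) ^ (1 / 4 : ℝ) :=
    Real.one_le_rpow (by linarith [n.cast_nonneg (α := ℝ)]) (by norm_num)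
  linarith

lemma tendsto_natCast_add_one_rpow_neg {q : ℝ} (hq : 0 < q) :
    Tendsto (fun n : ℕ => ((n : ℝ) + 1) ^ (-q)) atTop (𝓝 0) :=
  (tendsto_rpow_neg_atTop hq).comp (tendsto_natCast_atTop_atTop.atTop_add tendsto_const_nhds)

lemma tendsto_H_pow_div {m : ℕ} (hm : m < 4) :
    Tendsto (fun n : ℕ => H n ^ m / ((n : ℝ) + 1)) atTop (𝓝 0) := by
  have hbound : ∀ n : ℕ,
      H n ^ m / ((n : ℝ) + 1) ≤ 5 ^ m * ((n : ℝ) + 1) ^ (-(1 - m / 4 : ℝ)) := by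
    intro n
    have hn : (0 : ℝ) < n + 1 := by positivity
    calc H n ^ m / ((n : ℝ) + 1) ≤ (5 * ((n : ℝ) + 1) ^ (1 / 4 : ℝ)) ^ m / ((n : ℝ) + 1) := by
          gcongr
          · exact H_nonneg n
          · exact H_le_rpow n
      _ = 5 ^ m * ((n : ℝ) + 1) ^ (-(1 - m / 4 : ℝ)) := by
          rw [mul_pow, ← Real.rpow_natCast (((n : ℝ) + 1) ^ (1 / 4 : ℝ)), ← Real.rpow_mul hn.le,
            mul_div_assoc, ← Real.rpow_sub_one hn.ne']
          congr 2; ring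
  have hq : (0 : ℝ) < 1 - m / 4 := by
    have : (m : ℝ) < 4 := by exact_mod_cast hm
    linarith
  exact squeeze_zero (fun n => by positivity [H_nonneg n]) hbound
    (by simpa using (tendsto_natCast_add_one_rpow_neg hq).const_mul (5 ^ m))

lemma summable_natCast_add_one_rpow {p : ℝ} (hp : p < -1) :
    Summable (fun n : ℕ => ((n : ℝ) + 1) ^ p) := by
  simpa using (summable_nat_add_iff 1).2 (Real.summable_nat_rpow.2 hp)

lemma summable_H_div_sq : Summable (fun n : ℕ => H n / ((n : ℝ) + 1) ^ 2) := by
  refine Summable.of_nonneg_of_le (fun n => by positivity [H_nonneg n]) (fun n => ?_)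
    ((summable_natCast_add_one_rpow (p := 1 / 4 - 2) (by norm_num)).mul_left 5)
  have hn : (0 : ℝ) < n + 1 := by positivity
  calc H n / ((n : ℝ) + 1) ^ 2 ≤ 5 * ((n : ℝ) + 1) ^ (1 / 4 : ℝ) / ((n : ℝ) + 1) ^ 2 := by
        gcongr; exact H_le_rpow n
    _ = 5 * ((n : ℝ) + 1) ^ (1 / 4 - 2 : ℝ) := by
        rw [Real.rpow_sub hn, Real.rpow_two, mul_div_assoc]

theorem hasSum_mul_sub_of_tendsto {A C : ℕ → ℝ} {s : ℝ}
    (hnn : ∀ n, 0 ≤ A (n + 1) * (C n - C (n + 1)))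
    (hAC : Tendsto (fun n => A n * C n) atTop (𝓝 0))
    (hs : HasSum (fun n => (A (n + 1) - A n) * C n) s) :
    HasSum (fun n => A (n + 1) * (C n - C (n + 1))) (s + A 0 * C 0) := by
  rw [hasSum_iff_tendsto_nat_of_nonneg hnn]
  have hpartial : ∀ N, ∑ n ∈ range N, A (n + 1) * (C n - C (n + 1)) =
      ∑ n ∈ range N, (A (n + 1) - A n) * C n + A 0 * C 0 - A N * C N := by
    intro N
    induction N with
    | zero => simp
    | succ N ih => rw [sum_range_succ, sum_range_succ, ih]; ring
  simp_rw [hpartial]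
  simpa using (hs.tendsto_sum_nat.add_const (A 0 * C 0)).sub hAC

noncomputable def harmonicTail (k n : ℕ) : ℝ := (H (n + k) - H n) / k

lemma harmonicTail_eq_sum (k n : ℕ) :
    harmonicTail k n = (∑ i ∈ range k, 1 / ((n : ℝ) + i + 1)) / k := by
  rw [harmonicTail, H_add_sub_H]

lemma harmonicTail_nonneg (k n : ℕ) : 0 ≤ harmonicTail k n := by
  rw [harmonicTail_eq_sum]; positivity

lemma harmonicTail_le {k : ℕ} (hk : 0 < k) (n : ℕ) : harmonicTail k n ≤ 1 / ((n : ℝ) + 1) := by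
  rw [harmonicTail_eq_sum, div_le_iff₀ (by positivity)]
  calc ∑ i ∈ range k, 1 / ((n : ℝ) + i + 1) ≤ ∑ _i ∈ range k, 1 / ((n : ℝ) + 1) :=
        sum_le_sum fun i _ =>
          one_div_le_one_div_of_le (by positivity) (by linarith [i.cast_nonneg (α := ℝ)])
    _ = 1 / ((n : ℝ) + 1) * k := by simp [mul_comm]

lemma harmonicTail_sub_succ {k : ℕ} (hk : 0 < k) (n : ℕ) :
    harmonicTail k n - harmonicTail k (n + 1) = 1 / (((n : ℝ) + 1) * ((n : ℝ) + 1 + k)) := by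
  have hk' : (k : ℝ) ≠ 0 := by positivity
  rw [harmonicTail, harmonicTail, add_right_comm, H_succ, H_succ]
  push_cast
  field_simp
  ring

lemma tendsto_harmonicTail {k : ℕ} (hk : 0 < k) : Tendsto (harmonicTail k) atTop (𝓝 0) :=
  squeeze_zero (harmonicTail_nonneg k) (harmonicTail_le hk)
    tendsto_one_div_add_atTop_nhds_zero_nat

-- Telescoping is summation by parts against the constant sequence `1`.
lemma hasSum_one_div_mul_add {k : ℕ} (hk : 0 < k) :
    HasSum (fun n : ℕ => 1 / (((n : ℝ) + 1) * ((n : ℝ) + 1 + k))) (H k / k) := by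
  have h := hasSum_mul_sub_of_tendsto (A := 1) (C := harmonicTail k) (s := 0)
    (fun n => by rw [Pi.one_apply, one_mul, harmonicTail_sub_succ hk]; positivity)
    (by simpa using tendsto_harmonicTail hk) (by simp)
  simp only [Pi.one_apply, one_mul, zero_add, harmonicTail_sub_succ hk] at h
  simpa [harmonicTail, H_zero] using h

lemma sum_range_H_succ_div (n : ℕ) :
    ∑ i ∈ range n, H (i + 1) / ((i : ℝ) + 1) = (H n ^ 2 + zh 2 n) / 2 := by
  induction n with
  | zero => simp [H_zero, zh_zero]
  | succ n ih =>
    rw [sum_range_succ, ih, H_succ, zh_succ]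
    field_simp
    ring

lemma hasSum_H_div_mul_add {k : ℕ} (hk : 0 < k) :
    HasSum (fun n : ℕ => H n / (((n : ℝ) + 1) * ((n : ℝ) + 1 + k)))
      ((H k ^ 2 + zh 2 k) / (2 * k)) := by
  have hterm : ∀ n : ℕ, (H (n + 1) - H n) * harmonicTail k (n + 1) =
      (∑ i ∈ range k, 1 / (((n : ℝ) + 1) * ((n : ℝ) + 1 + (i + 1 : ℕ)))) / k := by
    intro n
    rw [H_succ, harmonicTail_eq_sum, add_sub_cancel_left, mul_div_assoc', mul_sum]
    push_cast
    congr 1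
    refine sum_congr rfl fun i _ => ?_
    field_simp
    ring
  have hs : HasSum (fun n => (H (n + 1) - H n) * harmonicTail k (n + 1))
      ((H k ^ 2 + zh 2 k) / 2 / k) := by
    simp_rw [hterm, ← sum_range_H_succ_div]
    exact_mod_cast
      (hasSum_sum fun (i : ℕ) _ => hasSum_one_div_mul_add i.succ_pos).div_const (k : ℝ)
  have hbd : Tendsto (fun n => H n * harmonicTail k (n + 1)) atTop (𝓝 0) := by
    refine squeeze_zero (fun n => mul_nonneg (H_nonneg n) (harmonicTail_nonneg k _))
      (fun n => ?_) (by simpa using tendsto_H_pow_div (m := 1) (by norm_num))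
    calc H n * harmonicTail k (n + 1) ≤ H n * (1 / ((n : ℝ) + 1)) := by
          gcongr
          · exact H_nonneg n
          · refine (harmonicTail_le hk _).trans ?_
            gcongr
            linarith
      _ = H n / ((n : ℝ) + 1) := by ring
  have h := hasSum_mul_sub_of_tendsto (A := H) (C := fun n => harmonicTail k (n + 1))
    (fun n => by rw [harmonicTail_sub_succ hk]; positivity [H_nonneg (n + 1)]) hbd hs
  have hshift : ∀ n : ℕ, H (n + 1) * (harmonicTail k (n + 1) - harmonicTail k (n + 1 + 1)) =
      H (n + 1) / ((((n + 1 : ℕ) : ℝ) + 1) * (((n + 1 : ℕ) : ℝ) + 1 + k)) := by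
    intro n
    rw [harmonicTail_sub_succ hk, mul_one_div]
  simp only [hshift, H_zero, zero_mul, add_zero, div_div] at h
  rw [← hasSum_nat_add_iff' 1]
  simpa [H_zero] using h

/-- `eulerTerm (m, j) + eulerTerm (j, m) = 1 / ((m + 1) (j + 1) (m + j + 2))`; summing this by rows
and by antidiagonals gives the two sides of Euler's identity. -/
noncomputable def eulerTerm (p : ℕ × ℕ) : ℝ := 1 / (((p.1 : ℝ) + 1) * ((p.1 : ℝ) + p.2 + 2) ^ 2)

lemma eulerTerm_nonneg (p : ℕ × ℕ) : 0 ≤ eulerTerm p := by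
  unfold eulerTerm; positivity

lemma hasSum_eulerTerm_add_swap (m : ℕ) :
    HasSum (fun j => eulerTerm (m, j) + eulerTerm (j, m)) (H (m + 1) / ((m : ℝ) + 1) ^ 2) := by
  have hsplit : ∀ j : ℕ, eulerTerm (m, j) + eulerTerm (j, m) =
      1 / ((m : ℝ) + 1) * (1 / (((j : ℝ) + 1) * ((j : ℝ) + 1 + (m + 1 : ℕ)))) := by
    intro j
    simp only [eulerTerm]
    push_cast
    field_simp
    ring
  simp_rw [hsplit]
  rw [show H (m + 1) / ((m : ℝ) + 1) ^ 2 = 1 / ((m : ℝ) + 1) * (H (m + 1) / ((m + 1 : ℕ) : ℝ)) by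
    push_cast; field_simp]
  exact (hasSum_one_div_mul_add m.succ_pos).mul_left _

lemma sum_antidiagonal_eulerTerm (n : ℕ) :
    ∑ p ∈ antidiagonal n, eulerTerm p = H (n + 1) / ((n : ℝ) + 2) ^ 2 := by
  have hdiag : ∀ p ∈ antidiagonal n, eulerTerm p = 1 / ((p.1 : ℝ) + 1) / ((n : ℝ) + 2) ^ 2 := by
    intro p hp
    rw [HasAntidiagonal.mem_antidiagonal] at hp
    rw [eulerTerm, ← hp, div_div]
    push_cast
    ring_nf
  rw [sum_congr rfl hdiag, ← sum_div, Nat.sum_antidiagonal_eq_sum_range_succ_mk, H_eq_sum_range]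

lemma H_succ_div_sq (n : ℕ) :
    H (n + 1) / ((n : ℝ) + 1) ^ 2 = H n / ((n : ℝ) + 1) ^ 2 + 1 / ((n : ℝ) + 1) ^ 3 := by
  rw [H_succ]
  field_simp

lemma summable_one_div_cube : Summable (fun n : ℕ => 1 / ((n : ℝ) + 1) ^ 3) := by
  simpa using (summable_nat_add_iff 1).2 (Real.summable_one_div_nat_pow.2 (by norm_num : 1 < 3))

lemma summable_eulerTerm : Summable eulerTerm := by
  have hsym : Summable (fun p : ℕ × ℕ => eulerTerm p + eulerTerm p.swap) := by
    refine (summable_prod_of_nonneg fun p =>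
      add_nonneg (eulerTerm_nonneg _) (eulerTerm_nonneg _)).2
        ⟨fun m => (hasSum_eulerTerm_add_swap m).summable, ?_⟩
    simp_rw [Prod.swap_prod_mk, (hasSum_eulerTerm_add_swap _).tsum_eq, H_succ_div_sq]
    exact summable_H_div_sq.add summable_one_div_cube
  exact hsym.of_nonneg_of_le eulerTerm_nonneg fun p => le_add_of_nonneg_right (eulerTerm_nonneg _)

-- Euler's `∑ H_n / n ^ 2 = 2 ζ(3)`, shifted to `∑ H_{n-1} / n ^ 2 = ζ(3)`.
theorem hasSum_H_div_sq : HasSum (fun n : ℕ => H n / ((n : ℝ) + 1) ^ 2) (Z 3) := by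
  set S := ∑' p, eulerTerm p
  have hdiag : HasSum (fun n : ℕ => H n / ((n : ℝ) + 1) ^ 2) S := by
    have h := (HasAntidiagonal.sigmaAntidiagonalEquivProd.hasSum_iff.2
      summable_eulerTerm.hasSum).sigma fun n => hasSum_fintype _
    rw [← hasSum_nat_add_iff' 1]
    simp only [Function.comp_apply, HasAntidiagonal.sigmaAntidiagonalEquivProd_apply,
      sum_coe_sort, sum_antidiagonal_eulerTerm] at h
    simpa [H_zero, add_assoc, one_add_one_eq_two] using h
  have hrows : HasSum (fun n : ℕ => H (n + 1) / ((n : ℝ) + 1) ^ 2) (S + S) :=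
    (summable_eulerTerm.hasSum.add
      ((Equiv.prodComm ℕ ℕ).hasSum_iff.2 summable_eulerTerm.hasSum)).prod_fiberwise
      hasSum_eulerTerm_add_swap
  simp_rw [H_succ_div_sq] at hrows
  have := hrows.unique (hdiag.add summable_one_div_cube.hasSum)
  rwa [show Z 3 = S by rw [Z]; linarith]

lemma sum_range_sq_H_add_zh_div (n : ℕ) :
    ∑ i ∈ range n, (H (i + 1) ^ 2 + zh 2 (i + 1)) / ((i : ℝ) + 1) =
      (H n ^ 3 + 3 * H n * zh 2 n + 2 * zh 3 n) / 3 := by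
  induction n with
  | zero => simp [H_zero, zh_zero]
  | succ n ih =>
    rw [sum_range_succ, ih, H_succ, zh_succ, zh_succ]
    field_simp
    ring

lemma sq_H_sub_zh_succ_sub (n : ℕ) :
    (H (n + 1) ^ 2 - zh 2 (n + 1)) - (H n ^ 2 - zh 2 n) = 2 * H n / ((n : ℝ) + 1) := by
  rw [H_succ, zh_succ]
  field_simp
  ring

lemma zh_two_le_sq_H (n : ℕ) : zh 2 n ≤ H n ^ 2 := by
  induction n with
  | zero => simp [H_zero, zh_zero]
  | succ n ih =>
    have := sq_H_sub_zh_succ_sub n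
    have : 0 ≤ 2 * H n / ((n : ℝ) + 1) := by positivity [H_nonneg n]
    linarith

lemma hasSum_sum_range_H_div_mul_add {k : ℕ} (hk : 0 < k) :
    HasSum (fun n => ∑ i ∈ range k, H n / (((n : ℝ) + 1) * ((n : ℝ) + 1 + i)))
      (Z 3 + ((H k ^ 3 + 3 * H k * zh 2 k + 2 * zh 3 k) / 3 - (H k ^ 2 + zh 2 k) / k) / 2) := by
  obtain ⟨K, rfl⟩ : ∃ K, k = K + 1 := ⟨k - 1, by omega⟩
  rw [← sum_range_sq_H_add_zh_div, sum_range_succ, Nat.cast_add_one, add_sub_cancel_right,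
    sum_div, add_comm (Z 3)]
  simp_rw [sum_range_succ']
  refine (hasSum_sum fun i _ => ?_).add (by simpa [sq] using hasSum_H_div_sq)
  rw [div_div, mul_comm, ← Nat.cast_add_one]
  exact hasSum_H_div_mul_add i.succ_pos

lemma sq_H_sub_zh_succ_sub_mul_harmonicTail (k n : ℕ) :
    ((H (n + 1) ^ 2 - zh 2 (n + 1)) - (H n ^ 2 - zh 2 n)) * harmonicTail k n =
      2 / k * ∑ i ∈ range k, H n / (((n : ℝ) + 1) * ((n : ℝ) + 1 + i)) := by
  rw [sq_H_sub_zh_succ_sub, harmonicTail_eq_sum, mul_div_assoc', mul_sum, sum_div, mul_sum]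
  refine sum_congr rfl fun i _ => ?_
  field_simp
  ring

lemma tendsto_sq_H_sub_zh_mul_harmonicTail {k : ℕ} (hk : 0 < k) :
    Tendsto (fun n => (H n ^ 2 - zh 2 n) * harmonicTail k n) atTop (𝓝 0) := by
  refine squeeze_zero
    (fun n => mul_nonneg (sub_nonneg.2 (zh_two_le_sq_H n)) (harmonicTail_nonneg k n))
    (fun n => ?_) (tendsto_H_pow_div (m := 2) (by norm_num))
  calc (H n ^ 2 - zh 2 n) * harmonicTail k n ≤ H n ^ 2 * (1 / ((n : ℝ) + 1)) :=
        mul_le_mul (by linarith [zh_nonneg 2 n]) (harmonicTail_le hk n)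
          (harmonicTail_nonneg k n) (sq_nonneg _)
    _ = H n ^ 2 / ((n : ℝ) + 1) := by ring

theorem stmt3 (k : ℕ) (hk : 0 < k) :
    ∑' n : ℕ, (H (n + 1) ^ 2 - zh 2 (n + 1)) / (((n : ℝ) + 1) * ((n : ℝ) + 1 + k)) =
      (1 / (k : ℝ)) *
        (2 * Z 3 + (H k ^ 3 + 3 * H k * zh 2 k + 2 * zh 3 k) / 3 -
          (H k ^ 2 + zh 2 k) / k) := by
  have h := hasSum_mul_sub_of_tendsto (A := fun n => H n ^ 2 - zh 2 n) (C := harmonicTail k)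
    (fun n => by
      rw [harmonicTail_sub_succ hk]
      positivity [sub_nonneg.2 (zh_two_le_sq_H (n + 1))])
    (tendsto_sq_H_sub_zh_mul_harmonicTail hk)
    (by
      simp_rw [sq_H_sub_zh_succ_sub_mul_harmonicTail]
      exact (hasSum_sum_range_H_div_mul_add hk).mul_left _)
  simp only [harmonicTail_sub_succ hk, H_zero, zh_zero, mul_one_div] at h
  rw [h.tsum_eq]
  field_simp
  ring
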